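/- arXiv:1805.03320 — 4 statements merged into one kernel-verified Lean document; each statement's English description precedes it below -/
import Mathlib

section
/- (Uniformity of path sampling, Theorem 3.) Let V be a finite set, E ⊆ V × V a directed edge relation, c as above, l ≥ 1, and suppose the total number of length-l walks T = Σ_{v ∈ V} c(l, v) is positive. Let (v_0, v_1, …, v_l) be any length-l walk in G. Then c(l − i, v_i) ≥ 1 for every 0 ≤ i ≤ l, and the sampling probability of this walk, namely the real number (c(l, v_0) / T) · Π_{q=1}^{l} ( c(l − q, v_q) / c(l − q + 1, v_{q−1}) ), equals 1/T. In particular, every length-l walk is sampled with the same probability 1/T. -/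
/-!
Along a walk, `c (k + 1) (v i)` has `c k (v (i + 1))` among its summands, so by induction from
`c 0 = 1` every count met by the sampler is at least `1`. The sampling probability then
telescopes: the denominator of each factor cancels the numerator of the previous one, leaving
`c 0 (v l) / T = 1 / T`.
-/

open Finset

theorem mul_prod_Icc_div_pred_eq {K : Type*} [CommGroupWithZero K] (f : ℕ → K) (n : ℕ)
    (hf : ∀ i < n, f i ≠ 0) :
    f 0 * ∏ q ∈ Icc 1 n, f q / f (q - 1) = f n := by
  induction n with
  | zero => simp
  | succ n ih =>
    rw [prod_Icc_succ_top (by omega), ← mul_assoc, ih fun i hi => hf i (by omega),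
      Nat.add_sub_cancel, mul_div_cancel₀ _ (hf n n.lt_succ_self)]

section WalkCount

variable {V : Type*} [Fintype V] {E : V → V → Prop} [DecidableRel E] {c : ℕ → V → ℕ}

theorem le_succ_of_adj (hcs : ∀ k v, c (k + 1) v = ∑ u ∈ univ.filter (fun u => E v u), c k u)
    {a b : V} (hab : E a b) (k : ℕ) : c k b ≤ c (k + 1) a := by
  rw [hcs]
  exact single_le_sum (f := c k) (fun _ _ => Nat.zero_le _) (by simp [hab])

theorem one_le_of_walk (hc0 : ∀ v, c 0 v = 1)
    (hcs : ∀ k v, c (k + 1) v = ∑ u ∈ univ.filter (fun u => E v u), c k u) :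
    ∀ (k : ℕ) (v : ℕ → V), (∀ i < k, E (v i) (v (i + 1))) → 1 ≤ c k (v 0) := by
  intro k
  induction k with
  | zero => intro v _; rw [hc0]
  | succ k ih =>
    intro v hw
    calc 1 ≤ c k (v 1) := ih (fun i => v (i + 1)) fun i hi => hw (i + 1) (by omega)
      _ ≤ c (k + 1) (v 0) := le_succ_of_adj hcs (hw 0 k.succ_pos) k

end WalkCount

theorem path_sampling_uniform_general {V : Type*} [Fintype V]
    (E : V → V → Prop) [DecidableRel E]
    (c : ℕ → V → ℕ)
    (hc0 : ∀ v, c 0 v = 1)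
    (hcs : ∀ k v, c (k + 1) v = ∑ u ∈ Finset.univ.filter (fun u => E v u), c k u)
    (l : ℕ)
    (v : ℕ → V)
    (hw : ∀ i < l, E (v i) (v (i + 1))) :
    (∀ i ≤ l, 1 ≤ c (l - i) (v i)) ∧
    ((c l (v 0) : ℝ) / (∑ u, c l u)) *
      ∏ q ∈ Finset.Icc 1 l,
        ((c (l - q) (v q) : ℝ) / (c (l - q + 1) (v (q - 1)))) =
      1 / (∑ u, c l u) := by
  have pos : ∀ i ≤ l, 1 ≤ c (l - i) (v i) := fun i hi => by
    simpa using one_le_of_walk hc0 hcs (l - i) (fun j => v (i + j))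
      fun j hj => by simpa only [add_assoc] using hw (i + j) (by omega)
  refine ⟨pos, ?_⟩
  set f : ℕ → ℝ := fun i => c (l - i) (v i)
  have hf : ∀ i < l, f i ≠ 0 := fun i hi => by
    have := pos i hi.le
    simp only [f]
    positivity
  have factors : ∏ q ∈ Icc 1 l, ((c (l - q) (v q) : ℝ) / (c (l - q + 1) (v (q - 1)))) =
      ∏ q ∈ Icc 1 l, f q / f (q - 1) :=
    prod_congr rfl fun q hq => by
      rw [mem_Icc] at hq
      simp only [f, show l - q + 1 = l - (q - 1) by omega]
  calc ((c l (v 0) : ℝ) / (∑ u, c l u)) *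
        ∏ q ∈ Icc 1 l, ((c (l - q) (v q) : ℝ) / (c (l - q + 1) (v (q - 1))))
      = (f 0 * ∏ q ∈ Icc 1 l, f q / f (q - 1)) / (∑ u, c l u) := by
        rw [factors, show f 0 = c l (v 0) by simp [f]]; ring
    _ = 1 / (∑ u, c l u) := by rw [mul_prod_Icc_div_pred_eq f l hf]; simp [f, hc0]

/-- Theorem 3, uniformity of path sampling: for any length-`l` walk
`v 0, v 1, …, v l`, the counts `c (l - i) (v i)` are positive, and the product of the
sampling probabilities of the path sampling algorithm equals `1 / T` where
`T = ∑ v, c l v` is the total number of length-`l` walks. -/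
theorem path_sampling_uniform {V : Type*} [Fintype V] [DecidableEq V]
    (E : V → V → Prop) [DecidableRel E]
    (c : ℕ → V → ℕ)
    (hc0 : ∀ v, c 0 v = 1)
    (hcs : ∀ k v, c (k + 1) v = ∑ u ∈ Finset.univ.filter (fun u => E v u), c k u)
    (l : ℕ) (hl : 1 ≤ l)
    (hT : 0 < ∑ v, c l v)
    (v : ℕ → V)
    (hw : ∀ i < l, E (v i) (v (i + 1))) :
    (∀ i ≤ l, 1 ≤ c (l - i) (v i)) ∧
    ((c l (v 0) : ℝ) / (∑ u, c l u)) *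
      ∏ q ∈ Finset.Icc 1 l,
        ((c (l - q) (v q) : ℝ) / (c (l - q + 1) (v (q - 1)))) =
      1 / (∑ u, c l u) :=
  path_sampling_uniform_general E c hc0 hcs l v hw
end

section
/- (Multiplicative Chernoff bound, Theorem 5.) Let (Ω, 𝒫) be a probability space and Z_1, …, Z_n : Ω → ℝ mutually independent random variables with 0 ≤ Z_i ≤ 1 almost surely for each i. Let Z = Z_1 + ⋯ + Z_n and μ = E[Z] = E[Z_1] + ⋯ + E[Z_n]. Then for every ε with 0 ≤ ε ≤ 1, 𝒫[ |Z − μ| ≥ ε·μ ] ≤ 2·exp(−ε²·μ/3). -/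
/-!
Each `Z i` with values in `[0,1]` has, by convexity of `exp`,
`E[exp (t Z i)] ≤ 1 + (eᵗ - 1) E[Z i] ≤ exp ((eᵗ - 1) E[Z i])`, so by independence the sum `S`
has cumulant generating function at most `(eᵗ - 1) μ`, that of a Poisson variable of mean `μ`.
Chernoff's bound at `t = 3ε/4` for the upper tail and at `t = -ε` for the lower tail, with
polynomial estimates of `exp` on `[0,1]`, gives `exp (-ε² μ / 3)` for each tail; `3ε/4` replaces
the optimal `log (1 + ε)` so that these estimates stay polynomial.
-/

open MeasureTheory ProbabilityTheory Finset Real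

lemma exp_three_mul_div_four_sub_le {ε : ℝ} (hε0 : 0 ≤ ε) (hε1 : ε ≤ 1) :
    exp (3 * ε / 4) - 1 - 3 * ε / 4 * (1 + ε) ≤ -(ε ^ 2) / 3 := by
  have hb := exp_bound' (x := 3 * ε / 4) (by linarith) (by linarith) (n := 4) (by norm_num)
  norm_num [sum_range_succ, Nat.factorial] at hb
  nlinarith [pow_le_pow_left₀ hε0 hε1 2, pow_le_pow_left₀ hε0 hε1 3,
    pow_le_pow_left₀ hε0 hε1 4, mul_nonneg hε0 hε0]

lemma exp_neg_sub_le {ε : ℝ} (hε0 : 0 ≤ ε) (hε1 : ε ≤ 1) :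
    exp (-ε) - 1 + ε * (1 - ε) ≤ -(ε ^ 2) / 3 := by
  have hb := exp_bound (x := -ε) (by rwa [abs_neg, abs_of_nonneg hε0]) (n := 4) (by norm_num)
  rw [abs_neg, abs_of_nonneg hε0] at hb
  norm_num [sum_range_succ, Nat.factorial] at hb
  rw [abs_le] at hb
  nlinarith [pow_le_pow_left₀ hε0 hε1 3, pow_le_pow_left₀ hε0 hε1 4,
    sq_nonneg ε, mul_nonneg (mul_nonneg hε0 hε0) hε0]

lemma exp_mul_le_one_add_mul_of_mem_Icc {t x : ℝ} (hx : x ∈ Set.Icc (0 : ℝ) 1) :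
    exp (t * x) ≤ 1 + (exp t - 1) * x := by
  have h := convexOn_exp.2 (Set.mem_univ 0) (Set.mem_univ t) (sub_nonneg.2 hx.2) hx.1
    (sub_add_cancel 1 x)
  simp only [smul_eq_mul, mul_zero, zero_add, exp_zero, mul_one] at h
  rw [mul_comm t x]
  linarith

section

variable {Ω : Type*} [MeasurableSpace Ω] {P : Measure Ω} [IsProbabilityMeasure P]

lemma mgf_le_one_add_mul_integral_of_mem_Icc {X : Ω → ℝ} (hX : AEMeasurable X P)
    (hb : ∀ᵐ ω ∂P, X ω ∈ Set.Icc (0 : ℝ) 1) (t : ℝ) :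
    mgf X P t ≤ 1 + (exp t - 1) * P[X] := by
  have hXint : Integrable X P := .of_mem_Icc 0 1 hX hb
  calc mgf X P t ≤ ∫ ω, 1 + (exp t - 1) * X ω ∂P :=
        integral_mono_ae (integrable_exp_mul_of_mem_Icc hX hb)
          ((integrable_const 1).add (hXint.const_mul _))
          (hb.mono fun _ hω => exp_mul_le_one_add_mul_of_mem_Icc hω)
    _ = 1 + (exp t - 1) * P[X] := by
        rw [integral_add (integrable_const 1) (hXint.const_mul _), integral_const_mul]
        simp

lemma cgf_le_mul_integral_of_mem_Icc {X : Ω → ℝ} (hX : AEMeasurable X P)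
    (hb : ∀ᵐ ω ∂P, X ω ∈ Set.Icc (0 : ℝ) 1) (t : ℝ) :
    cgf X P t ≤ (exp t - 1) * P[X] := by
  rw [cgf, log_le_iff_le_exp (mgf_pos (integrable_exp_mul_of_mem_Icc hX hb))]
  calc mgf X P t ≤ 1 + (exp t - 1) * P[X] := mgf_le_one_add_mul_integral_of_mem_Icc hX hb t
    _ ≤ exp ((exp t - 1) * P[X]) := by linarith [add_one_le_exp ((exp t - 1) * P[X])]

lemma ProbabilityTheory.iIndepFun.cgf_sum_le_mul_sum_integral_of_mem_Icc {ι : Type*} [Fintype ι]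
    {Z : ι → Ω → ℝ} (hindep : iIndepFun Z P) (hmeas : ∀ i, Measurable (Z i))
    (hb : ∀ i, ∀ᵐ ω ∂P, Z i ω ∈ Set.Icc (0 : ℝ) 1) (t : ℝ) :
    cgf (∑ i, Z i) P t ≤ (exp t - 1) * ∑ i, P[Z i] := by
  rw [hindep.cgf_sum hmeas fun i _ => integrable_exp_mul_of_mem_Icc (hmeas i).aemeasurable (hb i),
    mul_sum]
  exact sum_le_sum fun i _ => cgf_le_mul_integral_of_mem_Icc (hmeas i).aemeasurable (hb i) t

variable {S : Ω → ℝ} {m ε : ℝ}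

lemma measureReal_one_add_mul_le_le_exp_of_cgf_le (hm : 0 ≤ m) (hε0 : 0 ≤ ε) (hε1 : ε ≤ 1)
    (hint : ∀ t, Integrable (fun ω => exp (t * S ω)) P)
    (hcgf : ∀ t, cgf S P t ≤ (exp t - 1) * m) :
    P.real {ω | (1 + ε) * m ≤ S ω} ≤ exp (-(ε ^ 2) * m / 3) := by
  refine (measure_ge_le_exp_cgf _ (by linarith) (hint (3 * ε / 4))).trans (exp_le_exp.2 ?_)
  nlinarith [hcgf (3 * ε / 4), mul_le_mul_of_nonneg_right (exp_three_mul_div_four_sub_le hε0 hε1) hm]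

lemma measureReal_le_one_sub_mul_le_exp_of_cgf_le (hm : 0 ≤ m) (hε0 : 0 ≤ ε) (hε1 : ε ≤ 1)
    (hint : ∀ t, Integrable (fun ω => exp (t * S ω)) P)
    (hcgf : ∀ t, cgf S P t ≤ (exp t - 1) * m) :
    P.real {ω | S ω ≤ (1 - ε) * m} ≤ exp (-(ε ^ 2) * m / 3) := by
  refine (measure_le_le_exp_cgf _ (by linarith) (hint (-ε))).trans (exp_le_exp.2 ?_)
  nlinarith [hcgf (-ε), mul_le_mul_of_nonneg_right (exp_neg_sub_le hε0 hε1) hm]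

lemma measure_mul_le_abs_sub_le_of_cgf_le (hm : 0 ≤ m) (hε0 : 0 ≤ ε) (hε1 : ε ≤ 1)
    (hint : ∀ t, Integrable (fun ω => exp (t * S ω)) P)
    (hcgf : ∀ t, cgf S P t ≤ (exp t - 1) * m) :
    P {ω | ε * m ≤ |S ω - m|} ≤ ENNReal.ofReal (2 * exp (-(ε ^ 2) * m / 3)) := by
  have hsplit : {ω | ε * m ≤ |S ω - m|} ⊆ {ω | (1 + ε) * m ≤ S ω} ∪ {ω | S ω ≤ (1 - ε) * m} := by
    intro ω (hω : ε * m ≤ |S ω - m|)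
    rcases le_abs.1 hω with h | h
    · exact Or.inl (show (1 + ε) * m ≤ S ω by linarith)
    · exact Or.inr (show S ω ≤ (1 - ε) * m by linarith)
  rw [← ofReal_measureReal]
  refine ENNReal.ofReal_le_ofReal ?_
  calc P.real {ω | ε * m ≤ |S ω - m|}
      ≤ P.real {ω | (1 + ε) * m ≤ S ω} + P.real {ω | S ω ≤ (1 - ε) * m} :=
        (measureReal_mono hsplit).trans (measureReal_union_le _ _)
    _ ≤ exp (-(ε ^ 2) * m / 3) + exp (-(ε ^ 2) * m / 3) :=
        add_le_add (measureReal_one_add_mul_le_le_exp_of_cgf_le hm hε0 hε1 hint hcgf)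
          (measureReal_le_one_sub_mul_le_exp_of_cgf_le hm hε0 hε1 hint hcgf)
    _ = 2 * exp (-(ε ^ 2) * m / 3) := (two_mul _).symm

end

/-- Theorem 5, multiplicative Chernoff bound: for independent random
variables `Z i` with values in `[0,1]` a.s., with `Z = ∑ i, Z i` and
`μ = ∑ i, E[Z i]`, for every `0 ≤ ε ≤ 1`,
`P[|Z - μ| ≥ ε μ] ≤ 2 exp (-ε² μ / 3)`. -/
theorem multiplicative_chernoff_bound {Ω : Type*} [MeasurableSpace Ω]
    (P : Measure Ω) [IsProbabilityMeasure P]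
    (n : ℕ) (Z : Fin n → Ω → ℝ)
    (hmeas : ∀ i, Measurable (Z i))
    (hindep : iIndepFun Z P)
    (hbdd : ∀ i, ∀ᵐ ω ∂P, Z i ω ∈ Set.Icc (0 : ℝ) 1)
    (ε : ℝ) (hε0 : 0 ≤ ε) (hε1 : ε ≤ 1) :
    P {ω | ε * (∑ i, ∫ ω', Z i ω' ∂P) ≤ |(∑ i, Z i ω) - ∑ i, ∫ ω', Z i ω' ∂P|} ≤
      ENNReal.ofReal (2 * Real.exp (-(ε ^ 2) * (∑ i, ∫ ω', Z i ω' ∂P) / 3)) := by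
  have hmean_nonneg : 0 ≤ ∑ i, ∫ ω, Z i ω ∂P :=
    sum_nonneg fun i _ => integral_nonneg_of_ae ((hbdd i).mono fun _ hω => hω.1)
  have hint (t : ℝ) : Integrable (fun ω => exp (t * (∑ i, Z i) ω)) P :=
    hindep.integrable_exp_mul_sum hmeas fun i _ =>
      integrable_exp_mul_of_mem_Icc (hmeas i).aemeasurable (hbdd i)
  simpa only [Finset.sum_apply] using measure_mul_le_abs_sub_le_of_cgf_le hmean_nonneg hε0 hε1
    hint (hindep.cgf_sum_le_mul_sum_integral_of_mem_Icc hmeas hbdd)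
end

section
/- (Concentration of the estimator, Theorem 6.) Let (Ω, 𝒫) be a probability space, N and m positive integers, M : {1,…,N} → ℕ with M^i ≥ 1 for all i, f ∈ ℝ with 0 < f ≤ 1. For each i ∈ {1,…,N}, j ∈ {1,…,M^i}, h ∈ {1,…,m}, let U^i_j(h) : Ω → ℝ be random variables such that the whole family (U^i_j(h))_{i,j,h} is mutually independent, 0 ≤ U^i_j(h) ≤ M^i almost surely, and E[U^i_j(h)] = f/N. Let M* = max_{1 ≤ i ≤ N} M^i, a = (Σ_{i=1}^{N} M^i)/(N·M*), and define f̂ = (Σ_{i,j,h} U^i_j(h)) / ((m/N)·Σ_{i=1}^{N} M^i). Then for every ε with 0 ≤ ε ≤ f, 𝒫[ |f̂ − f| ≥ ε ] ≤ 2·exp(−ε²·a·m/3). -/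
/-!
After rescaling by `M* = max_i M^i`, the summands `U^i_j(h) / M*` are independent, `[0, 1]`-valued,
and their sum has mean `μ = f a m`. For such a sum the multiplicative Chernoff bound
`P[|S - μ| ≥ δ μ] ≤ 2 exp (-δ² μ / 3)` holds for `0 ≤ δ ≤ 1`: convexity gives
`E[e^{tX}] ≤ exp (E[X] (e^t - 1))`, and quadratic upper bounds for `exp` on `[0, 1/2]` and
`[-1, 0]` turn the exponential Markov inequality into the claimed exponent. The theorem is the
case `δ = ε / f`, using `ε² / f ≥ ε²`.
-/

open MeasureTheory ProbabilityTheory Finset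

namespace Real

theorem exp_le_one_add_add_two_thirds_mul_sq {x : ℝ} (h0 : 0 ≤ x) (h1 : x ≤ 1 / 2) :
    exp x ≤ 1 + x + 2 / 3 * x ^ 2 := by
  have h := exp_bound' h0 (h1.trans (by norm_num)) (n := 3) (by norm_num)
  norm_num [Finset.sum_range_succ, Nat.factorial] at h
  nlinarith [mul_le_mul_of_nonneg_right h1 (sq_nonneg x)]

theorem exp_neg_le_one_sub_add_sq_div_two {x : ℝ} (h0 : 0 ≤ x) (h1 : x ≤ 1) :
    exp (-x) ≤ 1 - x + x ^ 2 / 2 := by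
  have h := exp_bound (x := -x) (by rwa [abs_neg, abs_of_nonneg h0]) (n := 4) (by norm_num)
  rw [abs_neg, abs_of_nonneg h0] at h
  norm_num [Finset.sum_range_succ, Nat.factorial] at h
  nlinarith [(abs_le.1 h).2, mul_le_mul_of_nonneg_left h1 (pow_nonneg h0 3)]

theorem exp_mul_le_one_add_mul_exp_sub_one (t : ℝ) {x : ℝ} (hx : x ∈ Set.Icc (0 : ℝ) 1) :
    exp (t * x) ≤ 1 + x * (exp t - 1) := by
  have h := convexOn_exp.2 (Set.mem_univ 0) (Set.mem_univ t) (sub_nonneg.2 hx.2) hx.1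
    (sub_add_cancel 1 x)
  simp only [smul_eq_mul, mul_zero, zero_add, exp_zero, mul_one] at h
  rw [mul_comm t x]
  linarith

end Real

open Real

namespace ProbabilityTheory

variable {Ω ι : Type*} [MeasurableSpace Ω] {P : Measure Ω} [IsProbabilityMeasure P]

theorem mgf_le_exp_integral_mul_exp_sub_one {X : Ω → ℝ} (hX : AEMeasurable X P)
    (h01 : ∀ᵐ ω ∂P, X ω ∈ Set.Icc (0 : ℝ) 1) (t : ℝ) :
    mgf X P t ≤ exp (P[X] * (exp t - 1)) := by
  have hXint : Integrable X P := .of_mem_Icc 0 1 hX h01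
  have hlin : Integrable (fun ω => 1 + X ω * (exp t - 1)) P :=
    (integrable_const 1).add (hXint.mul_const _)
  calc mgf X P t ≤ ∫ ω, 1 + X ω * (exp t - 1) ∂P :=
        integral_mono_ae (integrable_exp_mul_of_mem_Icc hX h01) hlin
          (h01.mono fun _ hω => exp_mul_le_one_add_mul_exp_sub_one t hω)
    _ = 1 + P[X] * (exp t - 1) := by
        rw [integral_add (integrable_const 1) (hXint.mul_const _), integral_mul_const]
        simp
    _ ≤ exp (P[X] * (exp t - 1)) := by linarith [add_one_le_exp (P[X] * (exp t - 1))]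

variable [Fintype ι] {X : ι → Ω → ℝ}

theorem iIndepFun.mgf_sum_le_exp (hindep : iIndepFun X P) (hmeas : ∀ i, Measurable (X i))
    (h01 : ∀ i, ∀ᵐ ω ∂P, X i ω ∈ Set.Icc (0 : ℝ) 1) (t : ℝ) :
    mgf (∑ i, X i) P t ≤ exp ((∑ i, P[X i]) * (exp t - 1)) := by
  rw [hindep.mgf_sum hmeas, Finset.sum_mul, exp_sum]
  exact prod_le_prod (fun _ _ => mgf_nonneg) fun i _ =>
    mgf_le_exp_integral_mul_exp_sub_one (hmeas i).aemeasurable (h01 i) t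

theorem iIndepFun.measureReal_sum_ge_le (hindep : iIndepFun X P)
    (hmeas : ∀ i, Measurable (X i)) (h01 : ∀ i, ∀ᵐ ω ∂P, X i ω ∈ Set.Icc (0 : ℝ) 1)
    {δ : ℝ} (hδ0 : 0 ≤ δ) (hδ1 : δ ≤ 1) :
    P.real {ω | (1 + δ) * ∑ i, P[X i] ≤ ∑ i, X i ω} ≤ exp (-(δ ^ 2) * (∑ i, P[X i]) / 3) := by
  set E := ∑ i, P[X i]
  have hE : 0 ≤ E := sum_nonneg fun i _ => integral_nonneg_of_ae <| (h01 i).mono fun _ h => h.1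
  have hint := hindep.integrable_exp_mul_sum hmeas (s := univ) (t := δ / 2)
    fun i _ => integrable_exp_mul_of_mem_Icc (hmeas i).aemeasurable (h01 i)
  have hchernoff := measure_ge_le_exp_mul_mgf ((1 + δ) * E) (by positivity) hint
  simp only [Finset.sum_apply] at hchernoff
  -- `t = δ / 2` instead of the optimal `log (1 + δ)`, so that a quadratic bound on `exp` suffices
  have hexp := exp_le_one_add_add_two_thirds_mul_sq (x := δ / 2) (by positivity) (by linarith)
  calc _ ≤ exp (-(δ / 2) * ((1 + δ) * E)) * mgf (∑ i, X i) P (δ / 2) := hchernoff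
    _ ≤ exp (-(δ / 2) * ((1 + δ) * E)) * exp (E * (exp (δ / 2) - 1)) := by
        gcongr; exact hindep.mgf_sum_le_exp hmeas h01 _
    _ ≤ exp (-(δ ^ 2) * E / 3) := by
        rw [← exp_add, exp_le_exp]
        nlinarith [mul_le_mul_of_nonneg_left hexp hE]

theorem iIndepFun.measureReal_sum_le_le (hindep : iIndepFun X P)
    (hmeas : ∀ i, Measurable (X i)) (h01 : ∀ i, ∀ᵐ ω ∂P, X i ω ∈ Set.Icc (0 : ℝ) 1)
    {δ : ℝ} (hδ0 : 0 ≤ δ) (hδ1 : δ ≤ 1) :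
    P.real {ω | ∑ i, X i ω ≤ (1 - δ) * ∑ i, P[X i]} ≤ exp (-(δ ^ 2) * (∑ i, P[X i]) / 2) := by
  set E := ∑ i, P[X i]
  have hE : 0 ≤ E := sum_nonneg fun i _ => integral_nonneg_of_ae <| (h01 i).mono fun _ h => h.1
  have hint := hindep.integrable_exp_mul_sum hmeas (s := univ) (t := -δ)
    fun i _ => integrable_exp_mul_of_mem_Icc (hmeas i).aemeasurable (h01 i)
  have hchernoff := measure_le_le_exp_mul_mgf ((1 - δ) * E) (neg_nonpos.2 hδ0) hint
  simp only [Finset.sum_apply] at hchernoff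
  have hexp := exp_neg_le_one_sub_add_sq_div_two hδ0 hδ1
  calc _ ≤ exp (-(-δ) * ((1 - δ) * E)) * mgf (∑ i, X i) P (-δ) := hchernoff
    _ ≤ exp (-(-δ) * ((1 - δ) * E)) * exp (E * (exp (-δ) - 1)) := by
        gcongr; exact hindep.mgf_sum_le_exp hmeas h01 _
    _ ≤ exp (-(δ ^ 2) * E / 2) := by
        rw [← exp_add, exp_le_exp]
        nlinarith [mul_le_mul_of_nonneg_left hexp hE]

theorem iIndepFun.measure_abs_sum_sub_ge_le (hindep : iIndepFun X P)
    (hmeas : ∀ i, Measurable (X i)) (h01 : ∀ i, ∀ᵐ ω ∂P, X i ω ∈ Set.Icc (0 : ℝ) 1)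
    {δ : ℝ} (hδ0 : 0 ≤ δ) (hδ1 : δ ≤ 1) :
    P {ω | δ * ∑ i, P[X i] ≤ |∑ i, X i ω - ∑ i, P[X i]|} ≤
      ENNReal.ofReal (2 * exp (-(δ ^ 2) * (∑ i, P[X i]) / 3)) := by
  set E := ∑ i, P[X i]
  have hE : 0 ≤ E := sum_nonneg fun i _ => integral_nonneg_of_ae <| (h01 i).mono fun _ h => h.1
  have hupper := hindep.measureReal_sum_ge_le hmeas h01 hδ0 hδ1
  have hlower : P.real {ω | ∑ i, X i ω ≤ (1 - δ) * E} ≤ exp (-(δ ^ 2) * E / 3) :=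
    (hindep.measureReal_sum_le_le hmeas h01 hδ0 hδ1).trans <|
      exp_le_exp.2 <| by nlinarith [mul_nonneg (sq_nonneg δ) hE]
  calc _ ≤ P ({ω | (1 + δ) * E ≤ ∑ i, X i ω} ∪ {ω | ∑ i, X i ω ≤ (1 - δ) * E}) :=
        measure_mono fun ω hω => by
          simp only [Set.mem_ofPred_eq, Set.mem_union] at hω ⊢
          rcases le_abs.1 hω with h | h
          exacts [.inl (by linarith), .inr (by linarith)]
    _ ≤ ENNReal.ofReal (P.real {ω | (1 + δ) * E ≤ ∑ i, X i ω}) +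
          ENNReal.ofReal (P.real {ω | ∑ i, X i ω ≤ (1 - δ) * E}) := by
        rw [ofReal_measureReal, ofReal_measureReal]
        exact measure_union_le _ _
    _ ≤ ENNReal.ofReal (exp (-(δ ^ 2) * E / 3)) + ENNReal.ofReal (exp (-(δ ^ 2) * E / 3)) := by
        gcongr
    _ = ENNReal.ofReal (2 * exp (-(δ ^ 2) * E / 3)) := by
        rw [← ENNReal.ofReal_add (exp_nonneg _) (exp_nonneg _), two_mul]

theorem iIndepFun.measure_abs_sum_sub_ge_le_of_mem_Icc (hindep : iIndepFun X P)
    (hmeas : ∀ i, Measurable (X i)) {b : ℝ} (hb : 0 < b)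
    (hbdd : ∀ i, ∀ᵐ ω ∂P, X i ω ∈ Set.Icc 0 b) {δ : ℝ} (hδ0 : 0 ≤ δ) (hδ1 : δ ≤ 1) :
    P {ω | δ * ∑ i, P[X i] ≤ |∑ i, X i ω - ∑ i, P[X i]|} ≤
      ENNReal.ofReal (2 * exp (-(δ ^ 2) * (∑ i, P[X i]) / (3 * b))) := by
  have h01 (i : ι) : ∀ᵐ ω ∂P, X i ω / b ∈ Set.Icc (0 : ℝ) 1 :=
    (hbdd i).mono fun _ hω => ⟨div_nonneg hω.1 hb.le, (div_le_one hb).2 hω.2⟩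
  have hscaled := (hindep.comp (fun _ x => x / b) fun _ => measurable_id.div_const b
    ).measure_abs_sum_sub_ge_le (fun i => (hmeas i).div_const b) h01 hδ0 hδ1
  simp only [Function.comp_apply, integral_div, ← sum_div, ← sub_div, abs_div, abs_of_pos hb,
    ← mul_div_assoc, div_le_div_iff_of_pos_right hb] at hscaled
  rwa [div_div, mul_comm b] at hscaled

theorem iIndepFun.measure_le_abs_sum_div_sub_le (hindep : iIndepFun X P)
    (hmeas : ∀ i, Measurable (X i)) {b : ℝ} (hb : 0 < b)
    (hbdd : ∀ i, ∀ᵐ ω ∂P, X i ω ∈ Set.Icc 0 b) {f D : ℝ} (hf0 : 0 < f) (hf1 : f ≤ 1)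
    (hD : 0 < D) (hmean : ∑ i, P[X i] = f * D) {ε : ℝ} (hε0 : 0 ≤ ε) (hεf : ε ≤ f) :
    P {ω | ε ≤ |(∑ i, X i ω) / D - f|} ≤ ENNReal.ofReal (2 * exp (-(ε ^ 2) * D / (3 * b))) := by
  have hevent : {ω | ε ≤ |(∑ i, X i ω) / D - f|} =
      {ω | ε / f * ∑ i, P[X i] ≤ |∑ i, X i ω - ∑ i, P[X i]|} := by
    ext ω
    have hscale : ε / f * (f * D) = ε * D := by field_simp
    rw [Set.mem_ofPred_eq, Set.mem_ofPred_eq, hmean, hscale, div_sub' hD.ne', abs_div,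
      abs_of_pos hD, le_div_iff₀ hD, mul_comm D f]
  rw [hevent]
  refine (hindep.measure_abs_sum_sub_ge_le_of_mem_Icc hmeas hb hbdd (by positivity)
    ((div_le_one hf0).2 hεf)).trans ?_
  rw [hmean]
  refine ENNReal.ofReal_le_ofReal (mul_le_mul_of_nonneg_left (exp_le_exp.2 ?_) zero_le_two)
  calc -(ε / f) ^ 2 * (f * D) / (3 * b) = -(ε ^ 2 / f * D) / (3 * b) := by field_simp
    _ ≤ -(ε ^ 2 * D) / (3 * b) := by gcongr; exact le_div_self (sq_nonneg ε) hf0 hf1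
    _ = -(ε ^ 2) * D / (3 * b) := by ring

end ProbabilityTheory

/-- Theorem 6, concentration of the estimator: for the mutually
independent family `U i j h` with `0 ≤ U i j h ≤ M i` a.s. and `E[U i j h] = f / N`,
the estimator `f̂ = (∑ i j h, U i j h) / ((m / N) * ∑ i, M i)` satisfies, for every
`0 ≤ ε ≤ f`, `P[|f̂ - f| ≥ ε] ≤ 2 exp (-ε² a m / 3)` where
`a = (∑ i, M i) / (N * M*)` and `M* = max_i M i`. -/
theorem estimator_concentration {Ω : Type*} [MeasurableSpace Ω]
    (P : Measure Ω) [IsProbabilityMeasure P]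
    (N m : ℕ) (hN : 0 < N) (hm : 0 < m)
    (M : Fin N → ℕ) (hM : ∀ i, 1 ≤ M i)
    (f : ℝ) (hf0 : 0 < f) (hf1 : f ≤ 1)
    (U : (i : Fin N) → Fin (M i) → Fin m → Ω → ℝ)
    (hmeas : ∀ i j h, Measurable (U i j h))
    (hindep : iIndepFun
      (fun t : (i : Fin N) × Fin (M i) × Fin m => U t.1 t.2.1 t.2.2) P)
    (hbdd : ∀ i j h, ∀ᵐ ω ∂P, U i j h ω ∈ Set.Icc (0 : ℝ) (M i : ℝ))
    (hexp : ∀ i j h, ∫ ω, U i j h ω ∂P = f / (N : ℝ))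
    (ε : ℝ) (hε0 : 0 ≤ ε) (hεf : ε ≤ f) :
    P {ω | ε ≤ |(∑ i, ∑ j, ∑ h, U i j h ω) /
        (((m : ℝ) / (N : ℝ)) * ∑ i, (M i : ℝ)) - f|} ≤
      ENNReal.ofReal (2 * Real.exp
        (-(ε ^ 2) *
          ((∑ i, (M i : ℝ)) / ((N : ℝ) * ((Finset.univ.sup M : ℕ) : ℝ))) *
          (m : ℝ) / 3)) := by
  set Mstar : ℝ := ((univ.sup M : ℕ) : ℝ)
  set D : ℝ := (m : ℝ) / N * ∑ i, (M i : ℝ)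
  have hMle (i : Fin N) : (M i : ℝ) ≤ Mstar := Nat.cast_le.2 (le_sup (f := M) (mem_univ i))
  have hMstar : 0 < Mstar := one_pos.trans_le ((Nat.one_le_cast.2 (hM ⟨0, hN⟩)).trans (hMle _))
  have hD : 0 < D := mul_pos (by positivity)
    (sum_pos (fun i _ => Nat.cast_pos.2 (hM i)) ⟨⟨0, hN⟩, mem_univ _⟩)
  have hmean : ∑ t : (i : Fin N) × Fin (M i) × Fin m, P[U t.1 t.2.1 t.2.2] = f * D := by
    simp only [hexp, sum_const, card_univ, Fintype.card_sigma, Fintype.card_prod,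
      Fintype.card_fin, nsmul_eq_mul, D]
    push_cast
    field_simp
    rw [← sum_mul, mul_comm]
  have hconc := hindep.measure_le_abs_sum_div_sub_le (fun t => hmeas _ _ _) hMstar
    (fun t => (hbdd _ _ _).mono fun _ h => ⟨h.1, h.2.trans (hMle _)⟩) hf0 hf1 hD hmean hε0 hεf
  simp only [Fintype.sum_sigma, Fintype.sum_prod_type] at hconc
  refine hconc.trans_eq ?_
  congr 3
  simp only [D]
  ring
end

section
/- (Sample size bound in terms of the item set, Theorem 8.) Let (Ω, 𝒫) be a probability space, Q a nonempty finite index set with |Q| ≤ 2^m for a natural number m, and for each s ∈ Q let ĝ_s : Ω → ℝ be a random variable and f_s ∈ ℝ a target value. Let ε, δ ∈ (0,1), a > 0, and n a positive integer. Suppose that for every s ∈ Q, 𝒫[ |ĝ_s − f_s| ≥ ε/2 ] ≤ 2·exp(−ε²·a·n/12). If n ≥ ((12·m + 12)/(ε²·a))·ln(2/δ), then 𝒫[ ∀ s ∈ Q, |ĝ_s − f_s| < ε/2 ] ≥ 1 − δ. -/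
open MeasureTheory ProbabilityTheory Finset

/-! The event that some estimate is off by at least `ε/2` is a union of `|Q| ≤ 2 ^ m` events of
probability at most `2 exp (-ε² a n / 12)` each. The sample-size hypothesis says
`exp (-ε² a n / 12) ≤ (δ / 2) ^ (m + 1)`, so the union bound gives failure probability at most
`2 ^ (m + 1) (δ / 2) ^ (m + 1) = δ ^ (m + 1) ≤ δ`. -/

lemma ofReal_one_sub_card_mul_le_measure_forall {Ω ι : Type*} [MeasurableSpace Ω] [Fintype ι]
    (P : Measure Ω) [IsProbabilityMeasure P] (p : ι → Ω → Prop) {q : ℝ} (hq : 0 ≤ q)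
    (h : ∀ i, P {ω | ¬ p i ω} ≤ ENNReal.ofReal q) :
    ENNReal.ofReal (1 - Fintype.card ι * q) ≤ P {ω | ∀ i, p i ω} := by
  have hcompl : {ω | ∀ i, p i ω} = (⋃ i, {ω | ¬ p i ω})ᶜ := by
    ext ω
    simp
  have hunion : P (⋃ i, {ω | ¬ p i ω}) ≤ ENNReal.ofReal (Fintype.card ι * q) :=
    calc P (⋃ i, {ω | ¬ p i ω}) ≤ ∑ i, P {ω | ¬ p i ω} := measure_iUnion_fintype_le P _
      _ ≤ ∑ _i : ι, ENNReal.ofReal q := Finset.sum_le_sum fun i _ => h i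
      _ = ENNReal.ofReal (Fintype.card ι * q) := by
        rw [Finset.sum_const, nsmul_eq_mul, ENNReal.ofReal_mul (Nat.cast_nonneg _),
          ENNReal.ofReal_natCast, Finset.card_univ]
  rw [hcompl, ENNReal.ofReal_sub _ (by positivity), ENNReal.ofReal_one, tsub_le_iff_right]
  calc (1 : ENNReal) = P Set.univ := measure_univ.symm
    _ ≤ P (⋃ i, {ω | ¬ p i ω}) + P (⋃ i, {ω | ¬ p i ω})ᶜ := measure_univ_le_add_compl _
    _ ≤ P (⋃ i, {ω | ¬ p i ω})ᶜ + ENNReal.ofReal (Fintype.card ι * q) := by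
      rw [add_comm]
      gcongr

lemma two_pow_succ_mul_exp_neg_le {m : ℕ} {δ x : ℝ} (hδ₀ : 0 < δ) (hδ₁ : δ ≤ 1)
    (hx : (m + 1) * Real.log (2 / δ) ≤ x) :
    2 ^ (m + 1) * Real.exp (-x) ≤ δ := by
  have hexp : Real.exp (-x) ≤ (δ / 2) ^ (m + 1) := by
    have hlog : Real.log (δ / 2) = -Real.log (2 / δ) := by
      rw [← Real.log_inv, inv_div]
    calc Real.exp (-x) ≤ Real.exp (((m + 1 : ℕ) : ℝ) * Real.log (δ / 2)) := by
          rw [Real.exp_le_exp, hlog]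
          push_cast
          linarith
      _ = (δ / 2) ^ (m + 1) := by
          rw [Real.exp_nat_mul, Real.exp_log (by positivity)]
  calc 2 ^ (m + 1) * Real.exp (-x) ≤ 2 ^ (m + 1) * (δ / 2) ^ (m + 1) := by gcongr
    _ = δ ^ (m + 1) := by rw [← mul_pow, mul_div_cancel₀ δ two_ne_zero]
    _ ≤ δ := pow_le_of_le_one hδ₀.le hδ₁ (Nat.succ_ne_zero m)

theorem sample_size_bound_item_set_general {Ω : Type*} [MeasurableSpace Ω]
    (P : Measure Ω) [IsProbabilityMeasure P]
    (Q : Type*) [Fintype Q]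
    (m : ℕ) (hcard : Fintype.card Q ≤ 2 ^ m)
    (g : Q → Ω → ℝ) (f : Q → ℝ)
    (ε δ a : ℝ) (hε : ε ∈ Set.Ioo (0 : ℝ) 1) (hδ : δ ∈ Set.Ioo (0 : ℝ) 1)
    (ha : 0 < a)
    (n : ℕ)
    (hconc : ∀ s : Q,
      P {ω | ε / 2 ≤ |g s ω - f s|} ≤
        ENNReal.ofReal (2 * Real.exp (-(ε ^ 2) * a * (n : ℝ) / 12)))
    (hsize : (n : ℝ) ≥ ((12 * (m : ℝ) + 12) / (ε ^ 2 * a)) * Real.log (2 / δ)) :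
    P {ω | ∀ s : Q, |g s ω - f s| < ε / 2} ≥ ENNReal.ofReal (1 - δ) := by
  set q := 2 * Real.exp (-(ε ^ 2) * a * (n : ℝ) / 12)
  have hx : (m + 1) * Real.log (2 / δ) ≤ ε ^ 2 * a * n / 12 := by
    have hεa : 0 < ε ^ 2 * a := by have := hε.1; positivity
    rw [ge_iff_le, div_mul_eq_mul_div, div_le_iff₀ hεa] at hsize
    linarith
  have hfail : Fintype.card Q * q ≤ δ :=
    calc Fintype.card Q * q ≤ 2 ^ m * q := by gcongr; exact_mod_cast hcard
      _ = 2 ^ (m + 1) * Real.exp (-(ε ^ 2 * a * n / 12)) := by simp only [q]; ring_nf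
      _ ≤ δ := two_pow_succ_mul_exp_neg_le hδ.1 hδ.2.le hx
  calc ENNReal.ofReal (1 - δ) ≤ ENNReal.ofReal (1 - Fintype.card Q * q) :=
        ENNReal.ofReal_le_ofReal (by linarith)
    _ ≤ P {ω | ∀ s : Q, |g s ω - f s| < ε / 2} :=
        ofReal_one_sub_card_mul_le_measure_forall P _ (by positivity)
          fun s => by simpa only [not_lt] using hconc s

/-- Theorem 8, sample size bound in terms of the item set: if the
number of patterns satisfies `|Q| ≤ 2 ^ m`, the estimators concentrate as
`P[|ĝ s - f s| ≥ ε/2] ≤ 2 exp (-ε² a n / 12)`, and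
`n ≥ ((12 m + 12) / (ε² a)) * ln (2 / δ)`, then with probability at least `1 - δ`
every pattern is estimated within `ε/2`. -/
theorem sample_size_bound_item_set {Ω : Type*} [MeasurableSpace Ω]
    (P : Measure Ω) [IsProbabilityMeasure P]
    (Q : Type*) [Fintype Q] [Nonempty Q]
    (m : ℕ) (hcard : Fintype.card Q ≤ 2 ^ m)
    (g : Q → Ω → ℝ) (f : Q → ℝ)
    (ε δ a : ℝ) (hε : ε ∈ Set.Ioo (0 : ℝ) 1) (hδ : δ ∈ Set.Ioo (0 : ℝ) 1)
    (ha : 0 < a)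
    (n : ℕ) (hn : 0 < n)
    (hconc : ∀ s : Q,
      P {ω | ε / 2 ≤ |g s ω - f s|} ≤
        ENNReal.ofReal (2 * Real.exp (-(ε ^ 2) * a * (n : ℝ) / 12)))
    (hsize : (n : ℝ) ≥ ((12 * (m : ℝ) + 12) / (ε ^ 2 * a)) * Real.log (2 / δ)) :
    P {ω | ∀ s : Q, |g s ω - f s| < ε / 2} ≥ ENNReal.ofReal (1 - δ) :=
  sample_size_bound_item_set_general P Q m hcard g f ε δ a hε hδ ha n hconc hsize
end
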